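/- arXiv:1301.3262 — 2 statements merged into one kernel-verified Lean document; each statement's English description precedes it below -/
import Mathlib

section
/- Let p>1 and let c be a real number with 1 < c ≤ p. Let (λ_n)_{n≥1} be a positive real sequence with Λ_n = Σ_{k=1}^n λ_k, and let (x_n)_{n≥1} be a positive real sequence. Setting A_n = (1/Λ_n) Σ_{k=1}^n λ_k x_k and assuming the series on the right-hand side converges, one has Σ_{n=1}^∞ λ_n Λ_n^{p−c} A_n^p ≤ ( p/(c−1) ) Σ_{n=1}^∞ λ_n Λ_n^{p−c} x_n A_n^{p−1}. -/
/-!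
With `T n = Λ n ^ (p - c + 1) * A n ^ p` one has the one-step bound
`T n - T (n - 1) + (c - 1) λ n Λ n ^ (p - c) A n ^ p ≤ p λ n Λ n ^ (p - c) x n A n ^ (p - 1)`.
Substituting `λ n x n = Λ n A n - Λ (n - 1) A (n - 1)` and dividing by `T n`, it becomes
`p t s ≤ t ^ (p - c + 1) s ^ p + (c - 1) t + (p - c)` for `t = Λ (n - 1) / Λ n`,
`s = A (n - 1) / A n`, which is the weighted AM-GM inequality with weights
`1 / p, (c - 1) / p, (p - c) / p`. Summing telescopes, and `T N ≥ 0`.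
-/

open Finset

theorem Real.mul_mul_le_rpow_mul_rpow_add_mul_add {p c t s : ℝ} (hc : 1 ≤ c)
    (hcp : c ≤ p) (ht : 0 ≤ t) (hs : 0 ≤ s) :
    p * (t * s) ≤ t ^ (p - c + 1) * s ^ p + (c - 1) * t + (p - c) := by
  have hp : 0 < p := by linarith
  have amgm := Real.geom_mean_le_arith_mean3_weighted (p₁ := t ^ (p - c + 1) * s ^ p) (p₂ := t)
    (p₃ := 1) (by positivity : 0 ≤ 1 / p) (div_nonneg (sub_nonneg.2 hc) hp.le)
    (div_nonneg (sub_nonneg.2 hcp) hp.le) (by positivity) ht zero_le_one (by field_simp; ring)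
  have exponents : (p - c + 1) * (1 / p) + (c - 1) / p = 1 := by field_simp; ring
  have geom : (t ^ (p - c + 1) * s ^ p) ^ (1 / p) * t ^ ((c - 1) / p) * 1 ^ ((p - c) / p)
      = t * s := by
    rw [Real.mul_rpow (by positivity) (by positivity), ← Real.rpow_mul ht, ← Real.rpow_mul hs,
      mul_one_div_cancel hp.ne', Real.rpow_one, Real.one_rpow, mul_one, mul_right_comm,
      ← Real.rpow_add' ht (by rw [exponents]; exact one_ne_zero), exponents, Real.rpow_one]
  rw [geom] at amgm
  calc p * (t * s)
      ≤ p * (1 / p * (t ^ (p - c + 1) * s ^ p) + (c - 1) / p * t + (p - c) / p * 1) :=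
        mul_le_mul_of_nonneg_left amgm hp.le
    _ = _ := by field_simp

theorem hardy_increment_le {p c L d x a b : ℝ} (hc : 1 ≤ c) (hcp : c ≤ p) (hL : 0 ≤ L)
    (hM : 0 < L + d) (ha : 0 ≤ a) (hb : 0 < b) (hrec : (L + d) * b = L * a + d * x) :
    (c - 1) * (d * (L + d) ^ (p - c) * b ^ p) + (L + d) ^ (p - c + 1) * b ^ p
      ≤ p * (d * (L + d) ^ (p - c) * x * b ^ (p - 1)) + L ^ (p - c + 1) * a ^ p := by
  have key := Real.mul_mul_le_rpow_mul_rpow_add_mul_add hc hcp (div_nonneg hL hM.le)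
    (div_nonneg ha hb.le)
  rw [Real.div_rpow hL hM.le, Real.div_rpow ha hb.le] at key
  have hMq : (L + d) ^ (p - c + 1) = (L + d) ^ (p - c) * (L + d) := Real.rpow_add_one hM.ne' _
  have hbp : b ^ p = b ^ (p - 1) * b := by rw [Real.rpow_sub_one hb.ne', div_mul_cancel₀ _ hb.ne']
  rw [hMq, hbp] at key ⊢
  have scaled : p * (L * a * (L + d) ^ (p - c) * b ^ (p - 1))
      ≤ L ^ (p - c + 1) * a ^ p + (c - 1) * (L * (L + d) ^ (p - c) * b ^ (p - 1) * b)
        + (p - c) * ((L + d) ^ (p - c) * (L + d) * b ^ (p - 1) * b) := by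
    have hK : 0 < (L + d) ^ (p - c) * (L + d) * (b ^ (p - 1) * b) := by positivity
    have hMq0 : (L + d) ^ (p - c) ≠ 0 := (Real.rpow_pos_of_pos hM _).ne'
    have hbp0 : b ^ (p - 1) ≠ 0 := (Real.rpow_pos_of_pos hb _).ne'
    refine (Eq.le ?_).trans ((mul_le_mul_of_nonneg_left key hK.le).trans (Eq.le ?_))
    <;> field_simp
  linear_combination scaled + (p * (L + d) ^ (p - c) * b ^ (p - 1)) * hrec

noncomputable def partialSum (l : ℕ → ℝ) (n : ℕ) : ℝ := ∑ k ∈ Icc 1 n, l k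

/-- At `n = 0` this is `0 / 0 = 0`, so the first step of the telescoping needs no special case. -/
noncomputable def weightedMean (l x : ℕ → ℝ) (n : ℕ) : ℝ :=
  (∑ k ∈ Icc 1 n, l k * x k) / partialSum l n

section WeightedMean

variable {l x : ℕ → ℝ}

@[simp]
theorem partialSum_zero : partialSum l 0 = 0 := by simp [partialSum]

theorem partialSum_succ (n : ℕ) : partialSum l (n + 1) = partialSum l n + l (n + 1) :=
  sum_Icc_succ_top (by omega) l

theorem partialSum_pos (hl : ∀ n, 1 ≤ n → 0 < l n) {n : ℕ} (hn : 1 ≤ n) : 0 < partialSum l n :=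
  sum_pos (fun k hk => hl k (mem_Icc.1 hk).1) (nonempty_Icc.2 hn)

theorem partialSum_nonneg (hl : ∀ n, 1 ≤ n → 0 < l n) (n : ℕ) : 0 ≤ partialSum l n :=
  sum_nonneg fun k hk => (hl k (mem_Icc.1 hk).1).le

theorem weightedMean_pos (hl : ∀ n, 1 ≤ n → 0 < l n) (hx : ∀ n, 1 ≤ n → 0 < x n) {n : ℕ}
    (hn : 1 ≤ n) : 0 < weightedMean l x n :=
  div_pos (sum_pos (fun k hk => mul_pos (hl k (mem_Icc.1 hk).1) (hx k (mem_Icc.1 hk).1))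
    (nonempty_Icc.2 hn)) (partialSum_pos hl hn)

theorem weightedMean_nonneg (hl : ∀ n, 1 ≤ n → 0 < l n) (hx : ∀ n, 1 ≤ n → 0 < x n) (n : ℕ) :
    0 ≤ weightedMean l x n := by
  rcases Nat.eq_zero_or_pos n with rfl | hn
  · simp [weightedMean]
  · exact (weightedMean_pos hl hx hn).le

theorem partialSum_mul_weightedMean (hl : ∀ n, 1 ≤ n → 0 < l n) (n : ℕ) :
    partialSum l n * weightedMean l x n = ∑ k ∈ Icc 1 n, l k * x k := by
  rcases Nat.eq_zero_or_pos n with rfl | hn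
  · simp
  · exact mul_div_cancel₀ _ (partialSum_pos hl hn).ne'

theorem partialSum_succ_mul_weightedMean (hl : ∀ n, 1 ≤ n → 0 < l n) (n : ℕ) :
    partialSum l (n + 1) * weightedMean l x (n + 1)
      = partialSum l n * weightedMean l x n + l (n + 1) * x (n + 1) := by
  rw [partialSum_mul_weightedMean hl, partialSum_mul_weightedMean hl, sum_Icc_succ_top (by omega)]

theorem sub_one_mul_sum_add_le {p c : ℝ} (hc : 1 ≤ c) (hcp : c ≤ p)
    (hl : ∀ n, 1 ≤ n → 0 < l n) (hx : ∀ n, 1 ≤ n → 0 < x n) (N : ℕ) :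
    (c - 1) * ∑ n ∈ range N,
        l (n + 1) * partialSum l (n + 1) ^ (p - c) * weightedMean l x (n + 1) ^ p
      + partialSum l N ^ (p - c + 1) * weightedMean l x N ^ p
      ≤ p * ∑ n ∈ range N, l (n + 1) * partialSum l (n + 1) ^ (p - c) * x (n + 1)
          * weightedMean l x (n + 1) ^ (p - 1) := by
  induction N with
  | zero => simp [Real.zero_rpow (by linarith : p - c + 1 ≠ 0)]
  | succ N ih =>
    have hM := partialSum_pos hl N.succ_pos
    have hrec := partialSum_succ_mul_weightedMean (x := x) hl N
    rw [partialSum_succ] at hM hrec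
    have step := hardy_increment_le (p := p) hc hcp (partialSum_nonneg hl N) hM
      (weightedMean_nonneg hl hx N) (weightedMean_pos hl hx N.succ_pos) hrec
    rw [sum_range_succ, sum_range_succ, partialSum_succ]
    linarith

theorem tsum_ofReal_weightedMean_rpow_le {p c : ℝ} (hc : 1 < c) (hcp : c ≤ p)
    (hl : ∀ n, 1 ≤ n → 0 < l n) (hx : ∀ n, 1 ≤ n → 0 < x n)
    (hs : Summable fun n : ℕ => l (n + 1) * partialSum l (n + 1) ^ (p - c) * x (n + 1)
      * weightedMean l x (n + 1) ^ (p - 1)) :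
    ∑' n, ENNReal.ofReal
        (l (n + 1) * partialSum l (n + 1) ^ (p - c) * weightedMean l x (n + 1) ^ p)
      ≤ ENNReal.ofReal (p / (c - 1)) * ∑' n, ENNReal.ofReal
        (l (n + 1) * partialSum l (n + 1) ^ (p - c) * x (n + 1)
          * weightedMean l x (n + 1) ^ (p - 1)) := by
  have hΛ (n : ℕ) (r : ℝ) := Real.rpow_nonneg (partialSum_nonneg hl n) r
  have hA (n : ℕ) (r : ℝ) := Real.rpow_nonneg (weightedMean_nonneg hl hx n) r
  have hterm (n : ℕ) : 0 ≤ l (n + 1) * partialSum l (n + 1) ^ (p - c) * x (n + 1)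
      * weightedMean l x (n + 1) ^ (p - 1) :=
    mul_nonneg (mul_nonneg (mul_nonneg (hl _ n.succ_pos).le (hΛ _ _)) (hx _ n.succ_pos).le)
      (hA _ _)
  rw [← ENNReal.ofReal_tsum_of_nonneg hterm hs, ← ENNReal.ofReal_mul (by bound)]
  refine ENNReal.tsum_le_of_sum_range_le fun N => ?_
  rw [← ENNReal.ofReal_sum_of_nonneg fun n _ =>
    mul_nonneg (mul_nonneg (hl _ n.succ_pos).le (hΛ _ _)) (hA _ _)]
  refine ENNReal.ofReal_le_ofReal ?_
  have hlast := mul_nonneg (hΛ N (p - c + 1)) (hA N p)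
  have htel := sub_one_mul_sum_add_le hc.le hcp hl hx N
  have hpartial := hs.sum_le_tsum (range N) fun n _ => hterm n
  rw [div_mul_eq_mul_div, le_div_iff₀ (sub_pos.2 hc)]
  calc _ ≤ p * ∑ n ∈ range N, l (n + 1) * partialSum l (n + 1) ^ (p - c) * x (n + 1)
          * weightedMean l x (n + 1) ^ (p - 1) := by linarith
    _ ≤ _ := mul_le_mul_of_nonneg_left hpartial (by linarith)

end WeightedMean

theorem stmt_5_general (p c : ℝ) (hc1 : 1 < c) (hcp : c ≤ p)
    (l x : ℕ → ℝ) (hl : ∀ n, 1 ≤ n → 0 < l n) (hx : ∀ n, 1 ≤ n → 0 < x n)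
    (Λ : ℕ → ℝ) (hΛ : ∀ n, Λ n = ∑ k ∈ Finset.Icc 1 n, l k)
    (A : ℕ → ℝ) (hA : ∀ n, 1 ≤ n → A n = (1 / Λ n) * ∑ k ∈ Finset.Icc 1 n, l k * x k)
    (hs : Summable fun n : ℕ =>
      l (n + 1) * Λ (n + 1) ^ (p - c) * x (n + 1) * A (n + 1) ^ (p - 1)) :
    ∑' n : ℕ, ENNReal.ofReal (l (n + 1) * Λ (n + 1) ^ (p - c) * A (n + 1) ^ p)
      ≤ ENNReal.ofReal (p / (c - 1)) *
        ∑' n : ℕ, ENNReal.ofReal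
          (l (n + 1) * Λ (n + 1) ^ (p - c) * x (n + 1) * A (n + 1) ^ (p - 1)) := by
  obtain rfl : Λ = partialSum l := funext hΛ
  have hA_eq (n : ℕ) : A (n + 1) = weightedMean l x (n + 1) := by
    rw [hA _ n.succ_pos, weightedMean, one_div_mul_eq_div]
  simp only [hA_eq] at hs ⊢
  exact tsum_ofReal_weightedMean_rpow_le hc1 hcp hl hx hs

/-- inequality (1.8). -/
theorem stmt_5 (p c : ℝ) (hp : 1 < p) (hc1 : 1 < c) (hcp : c ≤ p)
    (l x : ℕ → ℝ) (hl : ∀ n, 1 ≤ n → 0 < l n) (hx : ∀ n, 1 ≤ n → 0 < x n)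
    (Λ : ℕ → ℝ) (hΛ : ∀ n, Λ n = ∑ k ∈ Finset.Icc 1 n, l k)
    (A : ℕ → ℝ) (hA : ∀ n, 1 ≤ n → A n = (1 / Λ n) * ∑ k ∈ Finset.Icc 1 n, l k * x k)
    (hs : Summable fun n : ℕ =>
      l (n + 1) * Λ (n + 1) ^ (p - c) * x (n + 1) * A (n + 1) ^ (p - 1)) :
    ∑' n : ℕ, ENNReal.ofReal (l (n + 1) * Λ (n + 1) ^ (p - c) * A (n + 1) ^ p)
      ≤ ENNReal.ofReal (p / (c - 1)) *
        ∑' n : ℕ, ENNReal.ofReal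
          (l (n + 1) * Λ (n + 1) ^ (p - c) * x (n + 1) * A (n + 1) ^ (p - 1)) :=
  stmt_5_general p c hc1 hcp l x hl hx Λ hΛ A hA hs
end

section
/- Let p>1 and 0<L<p. Let (λ_n)_{n≥1} be a positive real sequence with Λ_n = Σ_{k=1}^n λ_k. Suppose that for every integer n≥1 one has Λ_{n+1}/λ_{n+1} ≤ (Λ_n/λ_n)·(1 − Lλ_n/(pΛ_n))^{1−p} + L/p. Then for every nonnegative real sequence (x_n)_{n≥1} with Σ_{n=1}^∞ x_n^p < ∞, one has Σ_{n=1}^∞ ( (1/Λ_n) Σ_{k=1}^n λ_k x_k )^p ≤ (p/(p−L))^p Σ_{n=1}^∞ x_n^p. -/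
/-!
Put `c = L / p`, `μₙ = Λₙ / λₙ ≥ 1` and let `Aₙ` be the `n`-th weighted mean. From
`Λₙ₊₁ Aₙ₊₁ = Λₙ Aₙ + λₙ₊₁ xₙ₊₁` we get `μₙ₊₁ Aₙ₊₁ = xₙ₊₁ + (μₙ₊₁ - 1) Aₙ`, and convexity of
`t ↦ t ^ p` with weights `1 - c` and `μ - 1` (where `μ = μₙ₊₁`) gives
`μ ^ p (μ - c) ^ (1 - p) Aₙ₊₁ ^ p ≤ (1 - c) ^ (1 - p) xₙ₊₁ ^ p + (μ - 1) Aₙ ^ p`.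
The hypothesis on `λ` says exactly `μₙ₊₁ - c ≤ w(μₙ)` with `w(μ) = μ ^ p (μ - c) ^ (1 - p)`, so
`Φₙ = (w(μₙ) - (1 - c)) Aₙ ^ p` is a nonnegative potential with
`(1 - c) Aₙ₊₁ ^ p + Φₙ₊₁ ≤ (1 - c) ^ (1 - p) xₙ₊₁ ^ p + Φₙ`. Summing yields the bound with the
constant `(1 - c) ^ (-p) = (p / (p - L)) ^ p`.
-/

open Finset

namespace Real

lemma add_mul_rpow_le {p a b x y : ℝ} (hp : 1 ≤ p) (ha : 0 < a) (hb : 0 ≤ b) (hx : 0 ≤ x)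
    (hy : 0 ≤ y) : (x + b * y) ^ p ≤ (a + b) ^ (p - 1) * (a ^ (1 - p) * x ^ p + b * y ^ p) := by
  have hs : 0 < a + b := by linarith
  have hjensen := (convexOn_rpow hp).2 (Set.mem_Ici.2 (div_nonneg hx ha.le))
    (Set.mem_Ici.2 hy) (div_nonneg ha.le hs.le) (div_nonneg hb hs.le) (by field_simp)
  have hmean : a / (a + b) * (x / a) + b / (a + b) * y = (x + b * y) / (a + b) := by field_simp
  simp only [smul_eq_mul, hmean] at hjensen
  rw [div_rpow (by positivity) hs.le, div_rpow hx ha.le, div_le_iff₀ (by positivity)] at hjensen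
  calc (x + b * y) ^ p ≤ _ := hjensen
    _ = _ := by
      rw [rpow_sub hs, rpow_sub ha, rpow_one, rpow_one]
      field_simp

lemma rpow_mul_rpow_mul_rpow_le {p c μ a b x : ℝ} (hp : 1 ≤ p) (hc : c < 1) (hμ : 1 ≤ μ)
    (hx : 0 ≤ x) (hb : 0 ≤ b) (h : μ * a = x + (μ - 1) * b) :
    μ ^ p * (μ - c) ^ (1 - p) * a ^ p ≤ (1 - c) ^ (1 - p) * x ^ p + (μ - 1) * b ^ p := by
  have hμc : 0 < μ - c := by linarith
  have ha : 0 ≤ a := by nlinarith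
  have hjensen := add_mul_rpow_le hp (sub_pos.2 hc) (sub_nonneg.2 hμ) hx hb
  rw [← h, mul_rpow (by linarith) ha, show 1 - c + (μ - 1) = μ - c by ring] at hjensen
  have hcancel : (μ - c) ^ (1 - p) * (μ - c) ^ (p - 1) = 1 := by
    rw [← rpow_add hμc]; norm_num
  calc μ ^ p * (μ - c) ^ (1 - p) * a ^ p = (μ - c) ^ (1 - p) * (μ ^ p * a ^ p) := by ring
    _ ≤ (μ - c) ^ (1 - p) * ((μ - c) ^ (p - 1) * _) := by gcongr
    _ = _ := by rw [← mul_assoc, hcancel, one_mul]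

lemma one_sub_le_rpow_mul_rpow {p c μ : ℝ} (hp : 1 ≤ p) (hc : 0 ≤ c) (hμ : 1 ≤ μ)
    (hcμ : c < μ) :
    1 - c ≤ μ ^ p * (μ - c) ^ (1 - p) := by
  have hμ0 : 0 < μ := by linarith
  calc 1 - c ≤ μ := by linarith
    _ = μ ^ p * μ ^ (1 - p) := by rw [← rpow_add hμ0]; norm_num
    _ ≤ μ ^ p * (μ - c) ^ (1 - p) := by
      gcongr _ * ?_
      exact rpow_le_rpow_of_nonpos (sub_pos.2 hcμ) (by linarith) (by linarith)

lemma mul_one_sub_div_rpow {p c μ : ℝ} (hμ : 0 < μ) (hcμ : c < μ) :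
    μ * (1 - c / μ) ^ (1 - p) = μ ^ p * (μ - c) ^ (1 - p) := by
  rw [one_sub_div hμ.ne', div_rpow (sub_nonneg.2 hcμ.le) hμ.le, rpow_sub hμ, rpow_one]
  field_simp

end Real

lemma Finset.sum_range_le_sum_range_of_potential {E y Φ : ℕ → ℝ}
    (h : ∀ n, E n + Φ (n + 1) ≤ y n + Φ n) (hΦ0 : Φ 0 = 0) {N : ℕ} (hΦN : 0 ≤ Φ N) :
    ∑ n ∈ range N, E n ≤ ∑ n ∈ range N, y n := by
  have htelescope : ∑ n ∈ range N, E n ≤ ∑ n ∈ range N, y n + (Φ 0 - Φ N) := by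
    rw [← sum_range_sub', ← sum_add_distrib]
    exact sum_le_sum fun n _ => by linarith [h n]
  linarith

lemma ENNReal.tsum_ofReal_le_ofReal_mul_tsum_ofReal {f g : ℕ → ℝ} {C : ℝ} (hf : ∀ n, 0 ≤ f n)
    (hg : ∀ n, 0 ≤ g n) (h : ∀ N, ∑ n ∈ range N, f n ≤ C * ∑ n ∈ range N, g n) :
    ∑' n, ENNReal.ofReal (f n) ≤ ENNReal.ofReal C * ∑' n, ENNReal.ofReal (g n) := by
  rw [ENNReal.tsum_eq_iSup_nat]
  refine iSup_le fun N => ?_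
  calc ∑ n ∈ range N, ENNReal.ofReal (f n) = ENNReal.ofReal (∑ n ∈ range N, f n) :=
        (ENNReal.ofReal_sum_of_nonneg fun n _ => hf n).symm
    _ ≤ ENNReal.ofReal (C * ∑ n ∈ range N, g n) := ENNReal.ofReal_le_ofReal (h N)
    _ = ENNReal.ofReal C * ∑ n ∈ range N, ENNReal.ofReal (g n) := by
      rw [ENNReal.ofReal_mul' (sum_nonneg fun n _ => hg n),
        ENNReal.ofReal_sum_of_nonneg fun n _ => hg n]
    _ ≤ ENNReal.ofReal C * ∑' n, ENNReal.ofReal (g n) := by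
      gcongr
      exact ENNReal.sum_le_tsum _

lemma sum_rpow_le_of_mul_eq_add_mul {p c : ℝ} {μ a x : ℕ → ℝ} (hp : 1 ≤ p) (hc0 : 0 ≤ c)
    (hc1 : c < 1) (hμ : ∀ n, 1 ≤ n → 1 ≤ μ n) (ha : ∀ n, 0 ≤ a n) (ha0 : a 0 = 0)
    (hx : ∀ n, 0 ≤ x (n + 1))
    (hrec : ∀ n, μ (n + 1) * a (n + 1) = x (n + 1) + (μ (n + 1) - 1) * a n)
    (hμrec : ∀ n, 1 ≤ n → μ (n + 1) - c ≤ μ n ^ p * (μ n - c) ^ (1 - p)) (N : ℕ) :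
    ∑ n ∈ range N, a (n + 1) ^ p ≤ (1 - c) ^ (-p) * ∑ n ∈ range N, x (n + 1) ^ p := by
  have hc : 0 < 1 - c := by linarith
  have hzero : (0 : ℝ) ^ p = 0 := Real.zero_rpow (by linarith)
  set Φ : ℕ → ℝ := fun n => (μ n ^ p * (μ n - c) ^ (1 - p) - (1 - c)) * a n ^ p with hΦ
  have hΦnonneg : ∀ n, 0 ≤ Φ n := by
    rintro (_ | n)
    · simp [hΦ, ha0, hzero]
    · exact mul_nonneg (sub_nonneg.2 (Real.one_sub_le_rpow_mul_rpow hp hc0 (hμ _ le_add_self)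
        (by linarith [hμ (n + 1) le_add_self]))) (Real.rpow_nonneg (ha _) p)
  have hstep : ∀ n, (1 - c) * a (n + 1) ^ p + Φ (n + 1)
      ≤ (1 - c) ^ (1 - p) * x (n + 1) ^ p + Φ n := by
    intro n
    have hjensen :=
      Real.rpow_mul_rpow_mul_rpow_le hp hc1 (hμ (n + 1) le_add_self) (hx n) (ha n) (hrec n)
    have hweight : (μ (n + 1) - 1) * a n ^ p ≤ Φ n := by
      rcases Nat.eq_zero_or_pos n with rfl | hn
      · simp [hΦ, ha0, hzero]
      · exact mul_le_mul_of_nonneg_right (by linarith [hμrec n hn])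
          (Real.rpow_nonneg (ha n) p)
    simp only [hΦ] at hweight ⊢
    linarith
  have hsum :=
    sum_range_le_sum_range_of_potential hstep (by simp [hΦ, ha0, hzero]) (hΦnonneg N)
  rw [← mul_sum, ← mul_sum] at hsum
  calc ∑ n ∈ range N, a (n + 1) ^ p
      = (1 - c)⁻¹ * ((1 - c) * ∑ n ∈ range N, a (n + 1) ^ p) := by field_simp
    _ ≤ (1 - c)⁻¹ * ((1 - c) ^ (1 - p) * ∑ n ∈ range N, x (n + 1) ^ p) := by gcongr
    _ = (1 - c) ^ (-p) * ∑ n ∈ range N, x (n + 1) ^ p := by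
      rw [← mul_assoc, ← Real.rpow_neg_one, ← Real.rpow_add hc]
      ring_nf

section WeightedMean

variable {l : ℕ → ℝ}

lemma sum_Icc_pos (hl : ∀ n, 1 ≤ n → 0 < l n) {n : ℕ} (hn : 1 ≤ n) : 0 < ∑ k ∈ Icc 1 n, l k :=
  sum_pos (fun k hk => hl k (mem_Icc.1 hk).1) ⟨1, mem_Icc.2 ⟨le_rfl, hn⟩⟩

lemma one_le_sum_Icc_div (hl : ∀ n, 1 ≤ n → 0 < l n) {n : ℕ} (hn : 1 ≤ n) :
    1 ≤ (∑ k ∈ Icc 1 n, l k) / l n := by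
  rw [one_le_div (hl n hn)]
  exact single_le_sum (fun k hk => (hl k (mem_Icc.1 hk).1).le) (mem_Icc.2 ⟨hn, le_rfl⟩)

lemma centerMass_Icc_nonneg (hl : ∀ n, 1 ≤ n → 0 < l n) {x : ℕ → ℝ}
    (hx : ∀ n, 1 ≤ n → 0 ≤ x n) (n : ℕ) : 0 ≤ (Icc 1 n).centerMass l x :=
  mul_nonneg (inv_nonneg.2 (sum_nonneg fun k hk => (hl k (mem_Icc.1 hk).1).le))
    (sum_nonneg fun k hk => mul_nonneg (hl k (mem_Icc.1 hk).1).le (hx k (mem_Icc.1 hk).1))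

lemma sum_Icc_div_mul_centerMass_succ (hl : ∀ n, 1 ≤ n → 0 < l n) (x : ℕ → ℝ) (n : ℕ) :
    (∑ k ∈ Icc 1 (n + 1), l k) / l (n + 1) * (Icc 1 (n + 1)).centerMass l x
      = x (n + 1)
        + ((∑ k ∈ Icc 1 (n + 1), l k) / l (n + 1) - 1) * (Icc 1 n).centerMass l x := by
  have hl' := hl (n + 1) le_add_self
  simp only [centerMass, smul_eq_mul, sum_Icc_succ_top (Nat.le_add_left 1 n)]
  rcases Nat.eq_zero_or_pos n with rfl | hn
  · simp [hl'.ne']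
  · have hΛ := sum_Icc_pos hl hn
    have := (add_pos hΛ hl').ne'
    field_simp
    ring

end WeightedMean

theorem stmt_12_general (p L : ℝ) (hp : 1 < p) (hL0 : 0 < L) (hLp : L < p)
    (l : ℕ → ℝ) (hl : ∀ n, 1 ≤ n → 0 < l n)
    (Λ : ℕ → ℝ) (hΛ : ∀ n, Λ n = ∑ k ∈ Finset.Icc 1 n, l k)
    (hcond : ∀ n, 1 ≤ n →
      Λ (n + 1) / l (n + 1)
        ≤ (Λ n / l n) * (1 - L * l n / (p * Λ n)) ^ (1 - p) + L / p)
    (x : ℕ → ℝ) (hx : ∀ n, 1 ≤ n → 0 ≤ x n) :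
    ∑' n : ℕ, ENNReal.ofReal (((1 / Λ (n + 1)) * ∑ k ∈ Finset.Icc 1 (n + 1), l k * x k) ^ p)
      ≤ ENNReal.ofReal ((p / (p - L)) ^ p) * ∑' n : ℕ, ENNReal.ofReal (x (n + 1) ^ p) := by
  obtain rfl : Λ = fun n => ∑ k ∈ Icc 1 n, l k := funext hΛ
  beta_reduce at hcond
  have hp0 : 0 < p := by linarith
  have hc1 : L / p < 1 := (div_lt_one hp0).2 hLp
  have hratio_succ : ∀ n, 1 ≤ n → (∑ k ∈ Icc 1 (n + 1), l k) / l (n + 1) - L / p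
      ≤ ((∑ k ∈ Icc 1 n, l k) / l n) ^ p * ((∑ k ∈ Icc 1 n, l k) / l n - L / p) ^ (1 - p) := by
    intro n hn
    have hμ := one_le_sum_Icc_div hl hn
    have hcond := hcond n hn
    rw [← div_div_div_eq, Real.mul_one_sub_div_rpow (by linarith) (by linarith)] at hcond
    linarith
  have hmean : ∀ n, 1 / (∑ k ∈ Icc 1 n, l k) * ∑ k ∈ Icc 1 n, l k * x k
      = (Icc 1 n).centerMass l x := fun n => by simp [centerMass]
  have hconst : (p / (p - L)) ^ p = (1 - L / p) ^ (-p) := by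
    rw [one_sub_div hp0.ne', Real.rpow_neg (by positivity), ← Real.inv_rpow (by positivity),
      inv_div]
  simp only [hmean, hconst]
  exact ENNReal.tsum_ofReal_le_ofReal_mul_tsum_ofReal
    (fun n => Real.rpow_nonneg (centerMass_Icc_nonneg hl hx _) p)
    (fun n => Real.rpow_nonneg (hx _ le_add_self) p)
    (sum_rpow_le_of_mul_eq_add_mul hp.le (by positivity) hc1 (fun n => one_le_sum_Icc_div hl)
      (centerMass_Icc_nonneg hl hx) (by simp [centerMass]) (fun n => hx _ le_add_self)
      (sum_Icc_div_mul_centerMass_succ hl x) hratio_succ)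

/-- Corollary (Theorem 1.2 of [G5]) on l^p norms of weighted mean matrices. -/
theorem stmt_12 (p L : ℝ) (hp : 1 < p) (hL0 : 0 < L) (hLp : L < p)
    (l : ℕ → ℝ) (hl : ∀ n, 1 ≤ n → 0 < l n)
    (Λ : ℕ → ℝ) (hΛ : ∀ n, Λ n = ∑ k ∈ Finset.Icc 1 n, l k)
    (hcond : ∀ n, 1 ≤ n →
      Λ (n + 1) / l (n + 1)
        ≤ (Λ n / l n) * (1 - L * l n / (p * Λ n)) ^ (1 - p) + L / p)
    (x : ℕ → ℝ) (hx : ∀ n, 1 ≤ n → 0 ≤ x n)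
    (hxsum : Summable fun n : ℕ => x (n + 1) ^ p) :
    ∑' n : ℕ, ENNReal.ofReal (((1 / Λ (n + 1)) * ∑ k ∈ Finset.Icc 1 (n + 1), l k * x k) ^ p)
      ≤ ENNReal.ofReal ((p / (p - L)) ^ p) * ∑' n : ℕ, ENNReal.ofReal (x (n + 1) ^ p) :=
  stmt_12_general p L hp hL0 hLp l hl Λ hΛ hcond x hx
end
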